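/- arXiv:1906.12116 — 6 statements merged into one kernel-verified Lean document; each statement's English description precedes it below -/
import Mathlib

section
/- Fix ρ > 0 and τ > 0 with τ > ρσ. Then the function d₁ ↦ f(d₁,N₂;ρ,τ) is strictly convex on the interval [0, g(0,0,N₁;ρ)], and its unique minimizer on this interval is d₁ = g(0,0,N₁+N₂;ρ). -/
/-- `B(d,N;ρ)` with parameters `σ φ D T`. -/
noncomputable def B (σ φ D T ρ N d : ℝ) : ℝ :=
  φ * D * (1 + ρ * φ * D / T) - σ * N * d - ρ * σ ^ 2 * N * d ^ 2

/-- `g(d,N',N;ρ)` with parameters `σ φ D T`. -/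
noncomputable def g (σ φ D T ρ N' N d : ℝ) : ℝ :=
  (-1 + Real.sqrt (1 + (4 * ρ / N) * B σ φ D T ρ N' d)) / (2 * σ * ρ)

/-- `f(d₁,N₂;ρ,τ)` with parameters `σ φ D T` and `N₁`. -/
noncomputable def f (σ φ D T ρ τ N₁ N₂ d₁ : ℝ) : ℝ :=
  N₁ * d₁ + N₂ * g σ φ D T ρ N₁ N₂ d₁ +
    τ * (N₁ * d₁ ^ 2 + N₂ * (g σ φ D T ρ N₁ N₂ d₁) ^ 2)

/-!
Write `e = g(d₁,N₁,N₂;ρ)`, `S = N₁d₁ + N₂e` and `Q = N₁d₁² + N₂e²`. By definition of `g`,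
`σS + ρσ²Q = B(0,0;ρ)`, so eliminating `Q` gives `ρσ² f = τ B(0,0;ρ) − σ(τ − ρσ) S`: since
`τ > ρσ`, `f` is a decreasing affine function of `S`. Now `S` is strictly concave in `d₁`,
because `g` is, up to an affine change, the square root of a strictly concave quadratic in `d₁`.
And `S` is maximal at `d⋆ = g(0,0,N₁+N₂;ρ)`: the weighted Cauchy–Schwarz inequality
`S² ≤ (N₁+N₂) Q`, strict unless `d₁ = e`, turns the constraint into
`σS + ρσ²S²/(N₁+N₂) ≤ B(0,0;ρ)`, with equality exactly for `d₁ = e = d⋆`.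
-/

open Set

section StrictConcavity

variable {s : Set ℝ} {f : ℝ → ℝ}

theorem StrictConcaveOn.const_mul {c : ℝ} (hc : 0 < c) (hf : StrictConcaveOn ℝ s f) :
    StrictConcaveOn ℝ s fun x => c * f x := by
  refine ⟨hf.1, fun x hx y hy hxy a b ha hb hab => ?_⟩
  have h := mul_lt_mul_of_pos_left (hf.2 hx hy hxy ha hb hab) hc
  simp only [smul_eq_mul] at h ⊢
  linarith

theorem StrictConcaveOn.sqrt (hf : StrictConcaveOn ℝ s f) (hf₀ : ∀ x ∈ s, 0 ≤ f x) :
    StrictConcaveOn ℝ s fun x => √(f x) := by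
  refine ⟨hf.1, fun x hx y hy hxy a b ha hb hab => ?_⟩
  have hmix : 0 ≤ a • f x + b • f y :=
    add_nonneg (smul_nonneg ha.le (hf₀ x hx)) (smul_nonneg hb.le (hf₀ y hy))
  calc a • √(f x) + b • √(f y) ≤ √(a • f x + b • f y) :=
        Real.strictConcaveOn_sqrt.concaveOn.2 (hf₀ x hx) (hf₀ y hy) ha.le hb.le hab
    _ < √(f (a • x + b • y)) := Real.sqrt_lt_sqrt hmix (hf.2 hx hy hxy ha hb hab)

end StrictConcavity

theorem sq_add_mul_lt {n₁ n₂ x y : ℝ} (hn₁ : 0 < n₁) (hn₂ : 0 < n₂) (hxy : x ≠ y) :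
    (n₁ * x + n₂ * y) ^ 2 < (n₁ + n₂) * (n₁ * x ^ 2 + n₂ * y ^ 2) := by
  have : 0 < n₁ * n₂ * (x - y) ^ 2 := by
    have := sub_ne_zero.mpr hxy
    positivity
  linear_combination this

/-- `g(d,N',N;ρ)` is the nonnegative root `e` of `N * quad σ ρ e = B(d,N';ρ)`. -/
def quad (σ ρ x : ℝ) : ℝ := σ * x + ρ * σ ^ 2 * x ^ 2

theorem quad_strictMonoOn {σ ρ : ℝ} (hσ : 0 < σ) (hρ : 0 ≤ ρ) :
    StrictMonoOn (quad σ ρ) (Ici 0) := by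
  intro x hx y _ hxy
  rw [mem_Ici] at hx
  exact add_lt_add_of_lt_of_le (by gcongr) (by gcongr)

theorem B_eq_sub_mul_quad (σ φ D T ρ N d : ℝ) :
    B σ φ D T ρ N d = B σ φ D T ρ 0 0 - N * quad σ ρ d := by
  unfold B quad
  ring

theorem strictConcaveOn_B {σ φ D T ρ N : ℝ} (hσ : 0 < σ) (hρ : 0 < ρ) (hN : 0 < N) :
    StrictConcaveOn ℝ univ (B σ φ D T ρ N) := by
  refine ⟨convex_univ, fun x _ y _ hxy a b ha hb hab => ?_⟩
  have gap : 0 < ρ * σ ^ 2 * N * (a * b * (x - y) ^ 2) := by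
    have := sub_ne_zero.mpr hxy
    positivity
  simp only [smul_eq_mul, B]
  obtain rfl : b = 1 - a := by linarith
  linear_combination gap

section Root

variable {σ φ D T ρ N N' d : ℝ} (hσ : 0 < σ) (hρ : 0 < ρ) (hN : 0 < N)
include hσ hρ hN

theorem g_nonneg (hB : 0 ≤ B σ φ D T ρ N' d) : 0 ≤ g σ φ D T ρ N' N d := by
  have : 1 ≤ √(1 + 4 * ρ / N * B σ φ D T ρ N' d) :=
    Real.one_le_sqrt.mpr (le_add_of_nonneg_right (by positivity))
  unfold g
  exact div_nonneg (by linarith) (by positivity)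

theorem mul_quad_g (hB : 0 ≤ B σ φ D T ρ N' d) :
    N * quad σ ρ (g σ φ D T ρ N' N d) = B σ φ D T ρ N' d := by
  have hsq := Real.sq_sqrt (show 0 ≤ 1 + 4 * ρ / N * B σ φ D T ρ N' d by positivity)
  unfold quad g
  generalize √(1 + 4 * ρ / N * B σ φ D T ρ N' d) = r at hsq ⊢
  field_simp at hsq ⊢
  linear_combination hsq

theorem eq_g_of_mul_quad_eq {e : ℝ} (he : 0 ≤ e) (h : N * quad σ ρ e = B σ φ D T ρ N' d) :
    e = g σ φ D T ρ N' N d := by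
  have hB : 0 ≤ B σ φ D T ρ N' d := h ▸ mul_nonneg hN.le (by unfold quad; positivity)
  refine (quad_strictMonoOn hσ hρ.le).injOn he (g_nonneg hσ hρ hN hB) ?_
  exact mul_left_cancel₀ hN.ne' (h.trans (mul_quad_g hσ hρ hN hB).symm)

theorem strictConcaveOn_g {s : Set ℝ} (hN' : 0 < N') (hs : Convex ℝ s)
    (hB : ∀ d ∈ s, 0 ≤ B σ φ D T ρ N' d) : StrictConcaveOn ℝ s (g σ φ D T ρ N' N) := by
  have hrad : StrictConcaveOn ℝ s fun d => 4 * ρ / N * B σ φ D T ρ N' d + 1 :=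
    (((strictConcaveOn_B hσ hρ hN').subset (subset_univ s) hs).const_mul
      (by positivity)).add_const 1
  have hsqrt := (hrad.sqrt fun d hd => by have := hB d hd; positivity).const_mul
    (show 0 < 1 / (2 * σ * ρ) by positivity)
  refine (hsqrt.add_const (-1 / (2 * σ * ρ))).congr fun d _ => ?_
  simp only [Pi.add_apply, g, add_comm _ (1 : ℝ)]
  ring

end Root

noncomputable def linPart (σ φ D T ρ N₁ N₂ d : ℝ) : ℝ :=
  N₁ * d + N₂ * g σ φ D T ρ N₁ N₂ d

section Allocation

variable {σ φ D T ρ N₁ N₂ : ℝ}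

theorem f_eq_sub_mul_linPart {τ d : ℝ} (hσ : 0 < σ) (hρ : 0 < ρ) (hN₂ : 0 < N₂)
    (hd : 0 ≤ B σ φ D T ρ N₁ d) :
    f σ φ D T ρ τ N₁ N₂ d = τ * B σ φ D T ρ 0 0 / (ρ * σ ^ 2) -
      (τ - ρ * σ) / (ρ * σ) * linPart σ φ D T ρ N₁ N₂ d := by
  have hcon := mul_quad_g hσ hρ hN₂ hd
  rw [B_eq_sub_mul_quad] at hcon
  unfold quad at hcon
  unfold f linPart
  field_simp
  linear_combination τ * hcon

theorem B_nonneg_of_mem_Icc {d : ℝ} (hσ : 0 < σ) (hρ : 0 < ρ) (hN₁ : 0 < N₁)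
    (hB : 0 ≤ B σ φ D T ρ 0 0) (hd : d ∈ Icc 0 (g σ φ D T ρ 0 N₁ 0)) :
    0 ≤ B σ φ D T ρ N₁ d := by
  have hmax := mul_quad_g hσ hρ hN₁ hB
  have : quad σ ρ d ≤ quad σ ρ (g σ φ D T ρ 0 N₁ 0) :=
    (quad_strictMonoOn hσ hρ.le).monotoneOn hd.1 (g_nonneg hσ hρ hN₁ hB) hd.2
  rw [B_eq_sub_mul_quad]
  nlinarith

variable (hσ : 0 < σ) (hρ : 0 < ρ) (hN₁ : 0 < N₁) (hN₂ : 0 < N₂)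
  (hB : 0 ≤ B σ φ D T ρ 0 0)
include hσ hρ hN₁ hN₂ hB

theorem g_zero_add_le : g σ φ D T ρ 0 (N₁ + N₂) 0 ≤ g σ φ D T ρ 0 N₁ 0 := by
  have hN : 0 < N₁ + N₂ := add_pos hN₁ hN₂
  have hsum := mul_quad_g hσ hρ hN hB
  have hmax := mul_quad_g hσ hρ hN₁ hB
  have : 0 ≤ N₂ * quad σ ρ (g σ φ D T ρ 0 (N₁ + N₂) 0) :=
    mul_nonneg hN₂.le (by unfold quad; have := g_nonneg hσ hρ hN hB; positivity)
  refine ((quad_strictMonoOn hσ hρ.le).le_iff_le (g_nonneg hσ hρ hN hB)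
    (g_nonneg hσ hρ hN₁ hB)).mp (le_of_mul_le_mul_left ?_ hN₁)
  linarith

theorem g_g_zero_add :
    g σ φ D T ρ N₁ N₂ (g σ φ D T ρ 0 (N₁ + N₂) 0) = g σ φ D T ρ 0 (N₁ + N₂) 0 := by
  have hN : 0 < N₁ + N₂ := add_pos hN₁ hN₂
  have hsum := mul_quad_g hσ hρ hN hB
  refine (eq_g_of_mul_quad_eq hσ hρ hN₂ (g_nonneg hσ hρ hN hB) ?_).symm
  rw [B_eq_sub_mul_quad]
  linarith

theorem strictConcaveOn_linPart :
    StrictConcaveOn ℝ (Icc 0 (g σ φ D T ρ 0 N₁ 0)) (linPart σ φ D T ρ N₁ N₂) := by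
  have hg := (strictConcaveOn_g hσ hρ hN₂ hN₁ (convex_Icc _ _)
    fun d hd => B_nonneg_of_mem_Icc hσ hρ hN₁ hB hd).const_mul hN₂
  refine (hg.add_concaveOn ((concaveOn_id (convex_Icc _ _)).smul hN₁.le)).congr fun d _ => ?_
  simp only [Pi.add_apply, id, smul_eq_mul, linPart]
  ring

theorem linPart_lt_of_ne {d : ℝ} (hd : d ∈ Icc 0 (g σ φ D T ρ 0 N₁ 0))
    (hne : d ≠ g σ φ D T ρ 0 (N₁ + N₂) 0) :
    linPart σ φ D T ρ N₁ N₂ d < (N₁ + N₂) * g σ φ D T ρ 0 (N₁ + N₂) 0 := by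
  set dstar := g σ φ D T ρ 0 (N₁ + N₂) 0
  set e := g σ φ D T ρ N₁ N₂ d
  have hN : 0 < N₁ + N₂ := add_pos hN₁ hN₂
  have hBd := B_nonneg_of_mem_Icc hσ hρ hN₁ hB hd
  have hstar : (N₁ + N₂) * quad σ ρ dstar = B σ φ D T ρ 0 0 := mul_quad_g hσ hρ hN hB
  have hcon : N₁ * quad σ ρ d + N₂ * quad σ ρ e = B σ φ D T ρ 0 0 := by
    have := mul_quad_g hσ hρ hN₂ hBd
    rw [B_eq_sub_mul_quad] at this
    linarith
  have hde : d ≠ e := by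
    rintro hde
    refine hne (eq_g_of_mul_quad_eq hσ hρ hN hd.1 ?_)
    rw [← hcon, ← hde]
    ring
  have hS : 0 ≤ linPart σ φ D T ρ N₁ N₂ d / (N₁ + N₂) := by
    have := g_nonneg hσ hρ hN₂ hBd
    have := hd.1
    unfold linPart
    positivity
  have hquad : (N₁ + N₂) * quad σ ρ (linPart σ φ D T ρ N₁ N₂ d / (N₁ + N₂)) <
      (N₁ + N₂) * quad σ ρ dstar := by
    have hcs := sq_add_mul_lt hN₁ hN₂ hde
    rw [hstar, ← hcon]
    unfold quad linPart
    field_simp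
    nlinarith [mul_pos hρ (pow_pos hσ 2)]
  have := ((quad_strictMonoOn hσ hρ.le).lt_iff_lt hS (g_nonneg hσ hρ hN hB)).mp
    (lt_of_mul_lt_mul_left hquad hN.le)
  rwa [div_lt_iff₀' hN] at this

end Allocation

theorem stmt_4_general (σ φ D T : ℝ) (hσ : 0 < σ) (hφ : 0 < φ) (hD : 0 < D) (hT : 0 < T)
    (N₁ N₂ : ℕ) (hN₁ : 0 < N₁) (hN₂ : 0 < N₂)
    (ρ τ : ℝ) (hρ : 0 < ρ) (hτρ : ρ * σ < τ) :
    StrictConvexOn ℝ (Set.Icc 0 (g σ φ D T ρ 0 N₁ 0)) (fun d₁ => f σ φ D T ρ τ N₁ N₂ d₁) ∧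
    g σ φ D T ρ 0 ((N₁ : ℝ) + (N₂ : ℝ)) 0 ∈ Set.Icc 0 (g σ φ D T ρ 0 N₁ 0) ∧
    ∀ d₁ ∈ Set.Icc 0 (g σ φ D T ρ 0 N₁ 0), d₁ ≠ g σ φ D T ρ 0 ((N₁ : ℝ) + (N₂ : ℝ)) 0 →
      f σ φ D T ρ τ N₁ N₂ (g σ φ D T ρ 0 ((N₁ : ℝ) + (N₂ : ℝ)) 0) < f σ φ D T ρ τ N₁ N₂ d₁ := by
  have hN₁' : (0 : ℝ) < N₁ := Nat.cast_pos.mpr hN₁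
  have hN₂' : (0 : ℝ) < N₂ := Nat.cast_pos.mpr hN₂
  have hB : 0 ≤ B σ φ D T ρ 0 0 := by
    simp only [B, mul_zero, zero_mul, sub_zero]
    positivity
  have hBd (d : ℝ) (hd : d ∈ Icc 0 (g σ φ D T ρ 0 N₁ 0)) : 0 ≤ B σ φ D T ρ N₁ d :=
    B_nonneg_of_mem_Icc hσ hρ hN₁' hB hd
  have hmem : g σ φ D T ρ 0 ((N₁ : ℝ) + N₂) 0 ∈ Icc 0 (g σ φ D T ρ 0 N₁ 0) :=
    ⟨g_nonneg hσ hρ (add_pos hN₁' hN₂') hB, g_zero_add_le hσ hρ hN₁' hN₂' hB⟩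
  have hc : 0 < (τ - ρ * σ) / (ρ * σ) := div_pos (by linarith) (by positivity)
  refine ⟨?_, hmem, fun d hd hne => ?_⟩
  · refine (((strictConcaveOn_linPart hσ hρ hN₁' hN₂' hB).const_mul hc).neg.add_const
      (τ * B σ φ D T ρ 0 0 / (ρ * σ ^ 2))).congr fun d hd => ?_
    simp only [Pi.add_apply, Pi.neg_apply, f_eq_sub_mul_linPart hσ hρ hN₂' (hBd d hd)]
    ring
  · have hlin : linPart σ φ D T ρ N₁ N₂ (g σ φ D T ρ 0 ((N₁ : ℝ) + N₂) 0) =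
        (N₁ + N₂) * g σ φ D T ρ 0 ((N₁ : ℝ) + N₂) 0 := by
      rw [linPart, g_g_zero_add hσ hρ hN₁' hN₂' hB]
      ring
    rw [f_eq_sub_mul_linPart hσ hρ hN₂' (hBd _ hmem), f_eq_sub_mul_linPart hσ hρ hN₂' (hBd d hd),
      hlin]
    gcongr
    exact linPart_lt_of_ne hσ hρ hN₁' hN₂' hB hd hne

/-- if `τ > ρσ` then `f(·,N₂;ρ,τ)` is strictly convex on
`[0, g(0,0,N₁;ρ)]`, with unique minimizer `g(0,0,N₁+N₂;ρ)`. -/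
theorem stmt_4 (σ φ D T : ℝ) (hσ : 0 < σ) (hφ : 0 < φ) (hD : 0 < D) (hT : 0 < T)
    (N₁ N₂ : ℕ) (hN₁ : 0 < N₁) (hN₂ : 0 < N₂)
    (ρ τ : ℝ) (hρ : 0 < ρ) (hτ : 0 < τ) (hτρ : ρ * σ < τ) :
    StrictConvexOn ℝ (Set.Icc 0 (g σ φ D T ρ 0 N₁ 0)) (fun d₁ => f σ φ D T ρ τ N₁ N₂ d₁) ∧
    g σ φ D T ρ 0 ((N₁ : ℝ) + (N₂ : ℝ)) 0 ∈ Set.Icc 0 (g σ φ D T ρ 0 N₁ 0) ∧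
    ∀ d₁ ∈ Set.Icc 0 (g σ φ D T ρ 0 N₁ 0), d₁ ≠ g σ φ D T ρ 0 ((N₁ : ℝ) + (N₂ : ℝ)) 0 →
      f σ φ D T ρ τ N₁ N₂ (g σ φ D T ρ 0 ((N₁ : ℝ) + (N₂ : ℝ)) 0) < f σ φ D T ρ τ N₁ N₂ d₁ :=
  stmt_4_general σ φ D T hσ hφ hD hT N₁ N₂ hN₁ hN₂ ρ τ hρ hτρ
end

section
/- Let ρ₁ > 0 and ρ₂ > 0 with ρ₁ ≠ ρ₂. The set of solutions d₁ ∈ [0, min(g(0,0,N₁;ρ₁), g(0,0,N₁;ρ₂))] of the equation g(d₁,N₁,N₂;ρ₁) = g(d₁,N₁,N₂;ρ₂) is: {r₁⁻(N₂), r₁⁺(N₂)} if N₁ + N₂ ≥ T, N₂ ≤ T and N₁ ≤ T; {r₁⁻(N₂)} if N₁ + N₂ ≥ T, N₂ ≤ T and N₁ > T; {r₁⁺(N₂)} if N₁ + N₂ ≥ T, N₂ > T and N₁ ≤ T; and the empty set in all remaining cases. -/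
/-- `r₁⁻(η)` with parameters `σ φ D T N₁`. -/
noncomputable def r₁m (σ φ D T N₁ η : ℝ) : ℝ :=
  φ * D * (1 - Real.sqrt (1 + (N₁ + η) * (η - T) / (N₁ * T))) / (σ * (N₁ + η))

/-- `r₁⁺(η)` with parameters `σ φ D T N₁`. -/
noncomputable def r₁p (σ φ D T N₁ η : ℝ) : ℝ :=
  φ * D * (1 + Real.sqrt (1 + (N₁ + η) * (η - T) / (N₁ * T))) / (σ * (N₁ + η))

theorem add_mul_eq_zero_and_add_mul_eq_zero_iff {K : Type*} [Field K] {a b x y : K}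
    (hxy : x ≠ y) : a + x * b = 0 ∧ a + y * b = 0 ↔ a = 0 ∧ b = 0 := by
  constructor
  · rintro ⟨hx, hy⟩
    have hb : b = 0 := by
      have h : (x - y) * b = 0 := by linear_combination hx - hy
      exact (mul_eq_zero.1 h).resolve_left (sub_ne_zero.2 hxy)
    exact ⟨by simpa [hb] using hx, hb⟩
  · rintro ⟨rfl, rfl⟩
    simp

section

variable {σ φ D T ρ N N' N₁ N₂ d u : ℝ}

theorem g_nonneg_iff (hσ : 0 < σ) (hρ : 0 < ρ) (hN : 0 < N) :
    0 ≤ g σ φ D T ρ N' N d ↔ 0 ≤ B σ φ D T ρ N' d := by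
  rw [g, le_div_iff₀ (by positivity), zero_mul, le_neg_add_iff_add_le, add_zero,
    Real.one_le_sqrt, le_add_iff_nonneg_right, mul_nonneg_iff_of_pos_left (by positivity)]

theorem g_eq_iff (hσ : 0 < σ) (hρ : 0 < ρ) (hN : 0 < N) (hu : 0 ≤ u) :
    g σ φ D T ρ N' N d = u ↔ σ * N * u + ρ * σ ^ 2 * N * u ^ 2 = B σ φ D T ρ N' d := by
  have hsq : (1 + u * (2 * σ * ρ)) * (1 + u * (2 * σ * ρ))
      = 1 + 4 * ρ / N * (σ * N * u + ρ * σ ^ 2 * N * u ^ 2) := by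
    field_simp
    ring
  rw [g, div_eq_iff (by positivity), neg_add_eq_iff_eq_add,
    Real.sqrt_eq_iff_mul_self_eq_of_pos (by positivity), hsq, add_right_inj,
    mul_right_inj' (by positivity)]

theorem le_g_zero_iff (hσ : 0 < σ) (hρ : 0 < ρ) (hN : 0 < N) (hd : 0 ≤ d) :
    d ≤ g σ φ D T ρ 0 N 0 ↔ 0 ≤ B σ φ D T ρ N d := by
  set δ := g σ φ D T ρ 0 N 0
  have hB : B σ φ D T ρ N d = B σ φ D T ρ 0 0 - (σ * N * d + ρ * σ ^ 2 * N * d ^ 2) := by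
    unfold B
    ring
  suffices h : 0 ≤ B σ φ D T ρ 0 0 → (d ≤ δ ↔ 0 ≤ B σ φ D T ρ N d) by
    constructor
    · intro hdδ
      exact (h ((g_nonneg_iff hσ hρ hN).1 (hd.trans hdδ))).1 hdδ
    · intro hBd
      have hQ : 0 ≤ σ * N * d + ρ * σ ^ 2 * N * d ^ 2 := by positivity
      exact (h (by linarith)).2 hBd
  intro hB₀
  have hδ₀ : 0 ≤ δ := (g_nonneg_iff hσ hρ hN).2 hB₀
  have hδ : σ * N * δ + ρ * σ ^ 2 * N * δ ^ 2 = B σ φ D T ρ 0 0 :=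
    (g_eq_iff hσ hρ hN hδ₀).1 rfl
  have hfactor : B σ φ D T ρ N d = σ * N * (δ - d) * (1 + ρ * σ * (δ + d)) := by
    rw [hB, ← hδ]
    ring
  rw [hfactor, mul_nonneg_iff_of_pos_right (by positivity),
    mul_nonneg_iff_of_pos_left (by positivity), sub_nonneg]

theorem le_g_zero_and_g_eq_iff (hσ : 0 < σ) (hρ : 0 < ρ) (hN₁ : 0 < N₁) (hN₂ : 0 < N₂)
    (hd : 0 ≤ d) (hu : 0 ≤ u) :
    d ≤ g σ φ D T ρ 0 N₁ 0 ∧ g σ φ D T ρ N₁ N₂ d = u ↔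
      σ * N₂ * u + ρ * σ ^ 2 * N₂ * u ^ 2 = B σ φ D T ρ N₁ d := by
  rw [le_g_zero_iff hσ hρ hN₁ hd, g_eq_iff hσ hρ hN₂ hu]
  exact and_iff_right_of_imp fun h => h ▸ by positivity

theorem eq_B_iff :
    σ * N₂ * u + ρ * σ ^ 2 * N₂ * u ^ 2 = B σ φ D T ρ N₁ d ↔
      σ * (N₁ * d + N₂ * u) - φ * D
        + ρ * (σ ^ 2 * (N₁ * d ^ 2 + N₂ * u ^ 2) - (φ * D) ^ 2 / T) = 0 := by
  unfold B
  constructor <;> intro h <;> linear_combination h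

theorem mem_setOf_g_eq_g_iff {ρ₁ ρ₂ : ℝ} (hσ : 0 < σ) (hρ₁ : 0 < ρ₁)
    (hρ₂ : 0 < ρ₂) (hne : ρ₁ ≠ ρ₂) (hN₁ : 0 < N₁) (hN₂ : 0 < N₂) :
    (d ∈ Set.Icc 0 (min (g σ φ D T ρ₁ 0 N₁ 0) (g σ φ D T ρ₂ 0 N₁ 0)) ∧
        g σ φ D T ρ₁ N₁ N₂ d = g σ φ D T ρ₂ N₁ N₂ d) ↔
      0 ≤ d ∧ ∃ u, 0 ≤ u ∧ σ * (N₁ * d + N₂ * u) = φ * D ∧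
        σ ^ 2 * (N₁ * d ^ 2 + N₂ * u ^ 2) = (φ * D) ^ 2 / T := by
  simp only [Set.mem_Icc, le_min_iff]
  constructor
  · rintro ⟨⟨hd, hd₁, hd₂⟩, hg⟩
    set u := g σ φ D T ρ₁ N₁ N₂ d
    have hu : 0 ≤ u := (g_nonneg_iff hσ hρ₁ hN₂).2 ((le_g_zero_iff hσ hρ₁ hN₁ hd).1 hd₁)
    have h₁ := (le_g_zero_and_g_eq_iff hσ hρ₁ hN₁ hN₂ hd hu).1 ⟨hd₁, rfl⟩
    have h₂ := (le_g_zero_and_g_eq_iff hσ hρ₂ hN₁ hN₂ hd hu).1 ⟨hd₂, hg.symm⟩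
    rw [eq_B_iff] at h₁ h₂
    obtain ⟨hlin, hquad⟩ := (add_mul_eq_zero_and_add_mul_eq_zero_iff hne).1 ⟨h₁, h₂⟩
    exact ⟨hd, u, hu, sub_eq_zero.1 hlin, sub_eq_zero.1 hquad⟩
  · rintro ⟨hd, u, hu, hlin, hquad⟩
    have hB (ρ : ℝ) : σ * N₂ * u + ρ * σ ^ 2 * N₂ * u ^ 2 = B σ φ D T ρ N₁ d := by
      rw [eq_B_iff, hlin, hquad]
      ring
    obtain ⟨hd₁, hg₁⟩ := (le_g_zero_and_g_eq_iff hσ hρ₁ hN₁ hN₂ hd hu).2 (hB ρ₁)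
    obtain ⟨hd₂, hg₂⟩ := (le_g_zero_and_g_eq_iff hσ hρ₂ hN₁ hN₂ hd hu).2 (hB ρ₂)
    exact ⟨⟨hd, hd₁, hd₂⟩, hg₁.trans hg₂.symm⟩

end

theorem nonneg_and_exists_split_iff {σ P T n₁ n₂ d y : ℝ} (hσ : 0 < σ) (hP : 0 < P)
    (hT : 0 < T) (hn₁ : 0 < n₁) (hn₂ : 0 < n₂) (hd : d = P * (1 + y) / (σ * (n₁ + n₂))) :
    (0 ≤ d ∧ ∃ u, 0 ≤ u ∧ σ * (n₁ * d + n₂ * u) = P ∧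
        σ ^ 2 * (n₁ * d ^ 2 + n₂ * u ^ 2) = P ^ 2 / T) ↔
      -1 ≤ y ∧ n₁ * y ≤ n₂ ∧ n₁ * T * y ^ 2 = n₂ * (n₁ + n₂ - T) := by
  subst hd
  have hd₀ : 0 ≤ P * (1 + y) / (σ * (n₁ + n₂)) ↔ -1 ≤ y := by
    rw [le_div_iff₀ (by positivity), zero_mul, mul_nonneg_iff_of_pos_left hP,
      neg_le_iff_add_nonneg']
  have hu₀ : 0 ≤ P * (n₂ - n₁ * y) / (σ * n₂ * (n₁ + n₂)) ↔ n₁ * y ≤ n₂ := by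
    rw [le_div_iff₀ (by positivity), zero_mul, mul_nonneg_iff_of_pos_left hP, sub_nonneg]
  rw [hd₀]
  refine and_congr_right fun _ => ⟨?_, ?_⟩
  · rintro ⟨u, hu, hlin, hquad⟩
    have hu' : u = P * (n₂ - n₁ * y) / (σ * n₂ * (n₁ + n₂)) := by
      field_simp at hlin ⊢
      linear_combination hlin
    subst hu'
    field_simp at hquad
    refine ⟨hu₀.1 hu, mul_left_cancel₀ (by positivity : n₁ + n₂ ≠ 0) ?_⟩
    linear_combination hquad
  · rintro ⟨hy, hq⟩
    refine ⟨P * (n₂ - n₁ * y) / (σ * n₂ * (n₁ + n₂)), hu₀.2 hy, ?_, ?_⟩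
    · field_simp
      ring
    · field_simp
      linear_combination (n₁ + n₂) * hq

theorem setOf_g_eq_g_eq_image {σ φ D T ρ₁ ρ₂ N₁ N₂ : ℝ} (hσ : 0 < σ) (hφ : 0 < φ) (hD : 0 < D)
    (hT : 0 < T) (hρ₁ : 0 < ρ₁) (hρ₂ : 0 < ρ₂) (hne : ρ₁ ≠ ρ₂) (hN₁ : 0 < N₁) (hN₂ : 0 < N₂) :
    {d : ℝ | d ∈ Set.Icc 0 (min (g σ φ D T ρ₁ 0 N₁ 0) (g σ φ D T ρ₂ 0 N₁ 0)) ∧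
        g σ φ D T ρ₁ N₁ N₂ d = g σ φ D T ρ₂ N₁ N₂ d} =
      (fun y => φ * D * (1 + y) / (σ * (N₁ + N₂))) ''
        {y | -1 ≤ y ∧ N₁ * y ≤ N₂ ∧ N₁ * T * y ^ 2 = N₂ * (N₁ + N₂ - T)} := by
  have hP : 0 < φ * D := mul_pos hφ hD
  ext d
  rw [Set.mem_ofPred_eq, mem_setOf_g_eq_g_iff hσ hρ₁ hρ₂ hne hN₁ hN₂]
  constructor
  · intro h
    have hd : d = φ * D * (1 + (σ * (N₁ + N₂) * d / (φ * D) - 1)) / (σ * (N₁ + N₂)) := by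
      field_simp
      ring
    exact ⟨_, (nonneg_and_exists_split_iff hσ hP hT hN₁ hN₂ hd).1 h, hd.symm⟩
  · rintro ⟨y, hy, rfl⟩
    exact (nonneg_and_exists_split_iff hσ hP hT hN₁ hN₂ rfl).2 hy

theorem neg_one_le_and_mul_le_and_sq_eq_iff {n₁ n₂ T y : ℝ} (hn₁ : 0 < n₁) (hn₂ : 0 < n₂)
    (hT : 0 < T) :
    (-1 ≤ y ∧ n₁ * y ≤ n₂ ∧ n₁ * T * y ^ 2 = n₂ * (n₁ + n₂ - T)) ↔
      T ≤ n₁ + n₂ ∧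
        (n₂ ≤ T ∧ y = -√(1 + (n₁ + n₂) * (n₂ - T) / (n₁ * T)) ∨
          n₁ ≤ T ∧ y = √(1 + (n₁ + n₂) * (n₂ - T) / (n₁ * T))) := by
  generalize hdef : 1 + (n₁ + n₂) * (n₂ - T) / (n₁ * T) = a
  have hnT : 0 < n₁ * T := mul_pos hn₁ hT
  have ha : n₁ * T * a = n₂ * (n₁ + n₂ - T) := by
    rw [← hdef]
    field_simp
    ring
  rw [← ha, mul_right_inj' hnT.ne']
  by_cases h12 : T ≤ n₁ + n₂
  swap
  · have ha₀ : a < 0 := by nlinarith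
    simp only [h12, false_and, iff_false, not_and]
    intro _ _ hy
    nlinarith
  have ha₀ : 0 ≤ a := by nlinarith
  have hs₀ : 0 ≤ √a := Real.sqrt_nonneg a
  have hminus : -1 ≤ -√a ↔ n₂ ≤ T := by
    have key : n₁ * T * (1 - a) = (n₁ + n₂) * (T - n₂) := by linear_combination -ha
    rw [neg_le_neg_iff, Real.sqrt_le_one, ← sub_nonneg, ← sub_nonneg (b := n₂),
      ← mul_nonneg_iff_of_pos_left hnT, key, mul_nonneg_iff_of_pos_left (by positivity)]
  have hplus : n₁ * √a ≤ n₂ ↔ n₁ ≤ T := by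
    have key : T * (n₂ ^ 2 - (n₁ * √a) ^ 2) = n₂ * (n₁ + n₂) * (T - n₁) := by
      rw [mul_pow, Real.sq_sqrt ha₀]
      linear_combination -n₁ * ha
    rw [← pow_le_pow_iff_left₀ (by positivity) hn₂.le two_ne_zero, ← sub_nonneg,
      ← sub_nonneg (b := n₁), ← mul_nonneg_iff_of_pos_left hT, key,
      mul_nonneg_iff_of_pos_left (by positivity)]
  have hsq : y ^ 2 = a ↔ y = √a ∨ y = -√a := by
    rw [← sq_eq_sq_iff_eq_or_eq_neg, Real.sq_sqrt ha₀]
  rw [hsq]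
  simp only [h12, true_and]
  constructor
  · rintro ⟨h₁, h₂, rfl | rfl⟩
    · exact Or.inr ⟨hplus.1 h₂, rfl⟩
    · exact Or.inl ⟨hminus.1 h₁, rfl⟩
  · rintro (⟨h, rfl⟩ | ⟨h, rfl⟩)
    · exact ⟨hminus.2 h, by nlinarith, Or.inr rfl⟩
    · exact ⟨by linarith, hplus.2 h, Or.inl rfl⟩

/-- classification of the solutions `d₁ ∈ [0, min(g(0,0,N₁;ρ₁), g(0,0,N₁;ρ₂))]`
of `g(d₁,N₁,N₂;ρ₁) = g(d₁,N₁,N₂;ρ₂)` for `ρ₁ ≠ ρ₂`. -/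
theorem stmt_8 (σ φ D T : ℝ) (hσ : 0 < σ) (hφ : 0 < φ) (hD : 0 < D) (hT : 0 < T)
    (N₁ N₂ : ℕ) (hN₁ : 0 < N₁) (hN₂ : 0 < N₂)
    (ρ₁ ρ₂ : ℝ) (hρ₁ : 0 < ρ₁) (hρ₂ : 0 < ρ₂) (hne : ρ₁ ≠ ρ₂) :
    (T ≤ (N₁ : ℝ) + N₂ → (N₂ : ℝ) ≤ T → (N₁ : ℝ) ≤ T →
      {d₁ : ℝ | d₁ ∈ Set.Icc 0 (min (g σ φ D T ρ₁ 0 N₁ 0) (g σ φ D T ρ₂ 0 N₁ 0)) ∧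
          g σ φ D T ρ₁ N₁ N₂ d₁ = g σ φ D T ρ₂ N₁ N₂ d₁} =
        {r₁m σ φ D T N₁ N₂, r₁p σ φ D T N₁ N₂}) ∧
    (T ≤ (N₁ : ℝ) + N₂ → (N₂ : ℝ) ≤ T → T < (N₁ : ℝ) →
      {d₁ : ℝ | d₁ ∈ Set.Icc 0 (min (g σ φ D T ρ₁ 0 N₁ 0) (g σ φ D T ρ₂ 0 N₁ 0)) ∧
          g σ φ D T ρ₁ N₁ N₂ d₁ = g σ φ D T ρ₂ N₁ N₂ d₁} =
        {r₁m σ φ D T N₁ N₂}) ∧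
    (T ≤ (N₁ : ℝ) + N₂ → T < (N₂ : ℝ) → (N₁ : ℝ) ≤ T →
      {d₁ : ℝ | d₁ ∈ Set.Icc 0 (min (g σ φ D T ρ₁ 0 N₁ 0) (g σ φ D T ρ₂ 0 N₁ 0)) ∧
          g σ φ D T ρ₁ N₁ N₂ d₁ = g σ φ D T ρ₂ N₁ N₂ d₁} =
        {r₁p σ φ D T N₁ N₂}) ∧
    (¬(T ≤ (N₁ : ℝ) + N₂ ∧ (N₂ : ℝ) ≤ T ∧ (N₁ : ℝ) ≤ T) →
     ¬(T ≤ (N₁ : ℝ) + N₂ ∧ (N₂ : ℝ) ≤ T ∧ T < (N₁ : ℝ)) →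
     ¬(T ≤ (N₁ : ℝ) + N₂ ∧ T < (N₂ : ℝ) ∧ (N₁ : ℝ) ≤ T) →
      {d₁ : ℝ | d₁ ∈ Set.Icc 0 (min (g σ φ D T ρ₁ 0 N₁ 0) (g σ φ D T ρ₂ 0 N₁ 0)) ∧
          g σ φ D T ρ₁ N₁ N₂ d₁ = g σ φ D T ρ₂ N₁ N₂ d₁} =
        (∅ : Set ℝ)) := by
  have hn₁ : (0 : ℝ) < N₁ := Nat.cast_pos.2 hN₁
  have hn₂ : (0 : ℝ) < N₂ := Nat.cast_pos.2 hN₂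
  set s := √(1 + ((N₁ : ℝ) + N₂) * (N₂ - T) / (N₁ * T))
  set r := fun y : ℝ => φ * D * (1 + y) / (σ * (N₁ + N₂))
  have hS : {d₁ : ℝ | d₁ ∈ Set.Icc 0 (min (g σ φ D T ρ₁ 0 N₁ 0) (g σ φ D T ρ₂ 0 N₁ 0)) ∧
      g σ φ D T ρ₁ N₁ N₂ d₁ = g σ φ D T ρ₂ N₁ N₂ d₁} =
      r '' {y | T ≤ (N₁ : ℝ) + N₂ ∧ ((N₂ : ℝ) ≤ T ∧ y = -s ∨ (N₁ : ℝ) ≤ T ∧ y = s)} := by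
    rw [setOf_g_eq_g_eq_image hσ hφ hD hT hρ₁ hρ₂ hne hn₁ hn₂]
    congr 1
    ext y
    exact neg_one_le_and_mul_le_and_sq_eq_iff hn₁ hn₂ hT
  have hr₁m : r₁m σ φ D T N₁ N₂ = r (-s) := by rw [r₁m, sub_eq_add_neg]
  have hr₁p : r₁p σ φ D T N₁ N₂ = r s := rfl
  rw [hS, hr₁m, hr₁p]
  refine ⟨fun h12 hA hB => ?_, fun h12 hA hB => ?_, fun h12 hA hB => ?_, fun h₁ h₂ h₃ => ?_⟩
  · rw [← Set.image_pair]
    congr 1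
    ext y
    simp [h12, hA, hB]
  · rw [← Set.image_singleton]
    congr 1
    ext y
    simp [h12, hA, hB.not_ge]
  · rw [← Set.image_singleton]
    congr 1
    ext y
    simp [h12, hA.not_ge, hB]
  · rw [Set.image_eq_empty, Set.eq_empty_iff_forall_notMem]
    rintro y ⟨h12, ⟨hA, -⟩ | ⟨hB, -⟩⟩
    · exact h₂ ⟨h12, hA, lt_of_not_ge fun hB => h₁ ⟨h12, hA, hB⟩⟩
    · exact h₃ ⟨h12, lt_of_not_ge fun hA => h₁ ⟨h12, hA, hB⟩, hB⟩
end

section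
/- Suppose N₁ ≤ T and N₁ + N₂ ≥ T. Then r₁⁺(N₂) ≤ φD/(σ√(N₁T)). -/
namespace Real

theorem sqrt_mul_sqrt_add_sqrt_mul_sqrt_le {a b c d : ℝ} (ha : 0 ≤ a) (hb : 0 ≤ b) (hc : 0 ≤ c)
    (hd : 0 ≤ d) : √a * √c + √b * √d ≤ √(a + b) * √(c + d) := by
  simpa [Fin.sum_univ_two] using
    sum_sqrt_mul_sqrt_le Finset.univ (f := ![a, b]) (g := ![c, d])
      (fun i => by fin_cases i <;> assumption) (fun i => by fin_cases i <;> assumption)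

theorem sqrt_mul_add_sqrt_mul_sub_le {a b T : ℝ} (ha : 0 ≤ a) (hb : 0 ≤ b) (hT : 0 ≤ T)
    (hsum : T ≤ a + b) : √(a * T) + √(b * (a + b - T)) ≤ a + b := by
  have hab : 0 ≤ a + b := add_nonneg ha hb
  calc √(a * T) + √(b * (a + b - T)) = √a * √T + √b * √(a + b - T) := by
        rw [sqrt_mul ha, sqrt_mul hb]
    _ ≤ √(a + b) * √(T + (a + b - T)) :=
        sqrt_mul_sqrt_add_sqrt_mul_sqrt_le ha hb hT (sub_nonneg.2 hsum)
    _ = a + b := by rw [add_sub_cancel, mul_self_sqrt hab]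

end Real

theorem one_add_mul_sub_div_eq {a b T : ℝ} (ha : a ≠ 0) (hT : T ≠ 0) :
    1 + (a + b) * (b - T) / (a * T) = b * (a + b - T) / (a * T) := by
  field_simp
  ring

theorem r₁p_le {σ φ D T a b : ℝ} (hσ : 0 < σ) (hφ : 0 < φ) (hD : 0 < D) (hT : 0 < T)
    (ha : 0 < a) (hb : 0 ≤ b) (hsum : T ≤ a + b) :
    r₁p σ φ D T a b ≤ φ * D / (σ * √(a * T)) := by
  set u := √(a * T)
  set v := √(b * (a + b - T))
  have hu : 0 < u := Real.sqrt_pos.2 (mul_pos ha hT)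
  calc r₁p σ φ D T a b = φ * D * ((u + v) / u) / (σ * (a + b)) := by
        rw [r₁p, one_add_mul_sub_div_eq ha.ne' hT.ne', Real.sqrt_div' _ (mul_pos ha hT).le,
          add_div, div_self hu.ne']
    _ ≤ φ * D * ((a + b) / u) / (σ * (a + b)) := by
        gcongr φ * D * (?_ / u) / _
        exact Real.sqrt_mul_add_sqrt_mul_sub_le ha.le hb hT.le hsum
    _ = φ * D / (σ * u) := by field_simp

theorem stmt_9_general (σ φ D T : ℝ) (hσ : 0 < σ) (hφ : 0 < φ) (hD : 0 < D) (hT : 0 < T)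
    (N₁ N₂ : ℕ) (hN₁ : 0 < N₁)
    (hsum : T ≤ (N₁ : ℝ) + N₂) :
    r₁p σ φ D T N₁ N₂ ≤ φ * D / (σ * Real.sqrt ((N₁ : ℝ) * T)) :=
  r₁p_le hσ hφ hD hT (Nat.cast_pos.2 hN₁) N₂.cast_nonneg hsum

/-- if `N₁ ≤ T` and `N₁ + N₂ ≥ T` then `r₁⁺(N₂) ≤ φD/(σ√(N₁T))`. -/
theorem stmt_9 (σ φ D T : ℝ) (hσ : 0 < σ) (hφ : 0 < φ) (hD : 0 < D) (hT : 0 < T)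
    (N₁ N₂ : ℕ) (hN₁ : 0 < N₁) (hN₂ : 0 < N₂)
    (hN₁T : (N₁ : ℝ) ≤ T) (hsum : T ≤ (N₁ : ℝ) + N₂) :
    r₁p σ φ D T N₁ N₂ ≤ φ * D / (σ * Real.sqrt ((N₁ : ℝ) * T)) :=
  stmt_9_general σ φ D T hσ hφ hD hT N₁ N₂ hN₁ hsum
end

section
/- Let N₂ᴬ and N₂ᴮ be positive integers with N₂ᴬ < N₂ᴮ and N₁ + N₂ᴬ ≥ T. Then r₁⁺(N₂ᴬ) ≤ r₁⁺(N₂ᴮ). -/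
open Real

lemma sqrt_mul_add_le_sqrt_add_mul_add {x y d : ℝ} (hx : 0 ≤ x) (hy : 0 ≤ y) (hd : 0 ≤ d) :
    √(x * y) + d ≤ √((x + d) * (y + d)) := by
  have am_gm : 2 * √(x * y) ≤ x + y := by
    nlinarith [sq_nonneg (√x - √y), sq_sqrt hx, sq_sqrt hy, sqrt_mul hx y]
  apply le_sqrt_of_sq_le
  nlinarith [sq_sqrt (mul_nonneg hx hy)]

lemma antitoneOn_add_sqrt_mul_sub (a b : ℝ) :
    AntitoneOn (fun t => t + √((a - t) * (b - t))) (Set.Iic (min a b)) := by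
  intro t₁ _ t₂ ht₂ hle
  rw [Set.mem_Iic, le_min_iff] at ht₂
  have key := sqrt_mul_add_le_sqrt_add_mul_add (sub_nonneg.2 ht₂.1) (sub_nonneg.2 ht₂.2)
    (sub_nonneg.2 hle)
  simp only [sub_add_sub_cancel] at key
  linarith

lemma r₁p_eq {σ φ D T N₁ : ℝ} (η : ℝ) (hN₁ : N₁ ≠ 0) (hT : T ≠ 0) (hs : 0 < N₁ + η) :
    r₁p σ φ D T N₁ η =
      φ * D / σ * ((N₁ + η)⁻¹ + √((N₁⁻¹ - (N₁ + η)⁻¹) * (T⁻¹ - (N₁ + η)⁻¹))) := by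
  have radicand : 1 + (N₁ + η) * (η - T) / (N₁ * T) =
      (N₁⁻¹ - (N₁ + η)⁻¹) * (T⁻¹ - (N₁ + η)⁻¹) * (N₁ + η) ^ 2 := by
    field_simp
    ring
  rw [r₁p, radicand, sqrt_mul' _ (sq_nonneg _), sqrt_sq hs.le]
  field_simp

theorem stmt_11_general (σ φ D T : ℝ) (hσ : 0 < σ) (hφ : 0 < φ) (hD : 0 < D) (hT : 0 < T)
    (N₁ N₂A N₂B : ℕ) (hN₁ : 0 < N₁)
    (hAB : N₂A < N₂B) (hsum : T ≤ (N₁ : ℝ) + N₂A) :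
    r₁p σ φ D T N₁ N₂A ≤ r₁p σ φ D T N₁ N₂B := by
  have hN₁R : (0 : ℝ) < N₁ := by exact_mod_cast hN₁
  have mem_domain (η : ℕ) (hη : N₂A ≤ η) :
      ((N₁ : ℝ) + η)⁻¹ ∈ Set.Iic (min (N₁ : ℝ)⁻¹ T⁻¹) := by
    have hTη : T ≤ (N₁ : ℝ) + η := hsum.trans (by gcongr)
    rw [Set.mem_Iic, le_min_iff]
    exact ⟨by gcongr; exact le_add_of_nonneg_right η.cast_nonneg, by gcongr⟩
  rw [r₁p_eq _ hN₁R.ne' hT.ne' (by positivity), r₁p_eq _ hN₁R.ne' hT.ne' (by positivity)]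
  gcongr ?_ * ?_
  exact antitoneOn_add_sqrt_mul_sub _ _ (mem_domain _ hAB.le) (mem_domain _ le_rfl)
    (by gcongr)

/-- if `N₂ᴬ < N₂ᴮ` and `N₁ + N₂ᴬ ≥ T` then `r₁⁺(N₂ᴬ) ≤ r₁⁺(N₂ᴮ)`. -/
theorem stmt_11 (σ φ D T : ℝ) (hσ : 0 < σ) (hφ : 0 < φ) (hD : 0 < D) (hT : 0 < T)
    (N₁ N₂A N₂B : ℕ) (hN₁ : 0 < N₁) (hN₂A : 0 < N₂A) (hN₂B : 0 < N₂B)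
    (hAB : N₂A < N₂B) (hsum : T ≤ (N₁ : ℝ) + N₂A) :
    r₁p σ φ D T N₁ N₂A ≤ r₁p σ φ D T N₁ N₂B :=
  stmt_11_general σ φ D T hσ hφ hD hT N₁ N₂A N₂B hN₁ hAB hsum
end

section
/- Fix a positive integer N₁ and let ρ > 0. The function ρ' ↦ g(0,0,N₁;ρ') is differentiable at ρ, and its derivative at ρ is nonpositive if and only if N₁ ≤ T. -/
/-!
With `a = 4φD/N` and `b = 4(φD)²/(NT)` one has `g(0,0,N;ρ) = (√(1 + aρ + bρ²) - 1)/(2σρ)`.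
The quotient rule shows that the derivative of this has the sign of `2√(1 + aρ + bρ²) - 2 - aρ`;
squaring, that is nonpositive iff `4b ≤ a²`, which for these coefficients says `N ≤ T`.
-/

open Real

theorem hasDerivAt_sqrt_quadratic_div (a b : ℝ) {c x : ℝ} (hc : c ≠ 0) (hx : x ≠ 0)
    (hu : 0 < 1 + a * x + b * x ^ 2) :
    HasDerivAt (fun y => (-1 + √(1 + a * y + b * y ^ 2)) / (c * y))
      ((2 * √(1 + a * x + b * x ^ 2) - 2 - a * x) / (2 * c * x ^ 2 * √(1 + a * x + b * x ^ 2)))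
      x := by
  have hq : HasDerivAt (fun y => 1 + a * y + b * y ^ 2) (a + 2 * b * x) x := by
    refine ((((hasDerivAt_id x).const_mul a).const_add 1).add
      ((hasDerivAt_pow 2 x).const_mul b)).congr_deriv ?_
    norm_num; ring
  have hden : HasDerivAt (fun y => c * y) c x := by simpa using (hasDerivAt_id x).const_mul c
  refine (((hq.sqrt hu.ne').const_add (-1)).div hden (mul_ne_zero hc hx)).congr_deriv ?_
  have hsq := sq_sqrt hu.le
  field_simp
  linear_combination (-2) * hsq

theorem two_sqrt_quadratic_le_iff {a b x : ℝ} (ha : 0 ≤ a) (hx : 0 < x) :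
    2 * √(1 + a * x + b * x ^ 2) ≤ 2 + a * x ↔ 4 * b ≤ a ^ 2 := by
  have hrhs : 0 ≤ 1 + a * x / 2 := by positivity
  rw [← le_div_iff₀' two_pos, add_div, div_self two_ne_zero, sqrt_le_left hrhs]
  have hx2 : 0 < x ^ 2 := by positivity
  constructor <;> intro h <;> nlinarith

theorem sqrt_quadratic_deriv_nonpos_iff {a b c x : ℝ} (ha : 0 ≤ a) (hc : 0 < c) (hx : 0 < x)
    (hu : 0 < 1 + a * x + b * x ^ 2) :
    (2 * √(1 + a * x + b * x ^ 2) - 2 - a * x) / (2 * c * x ^ 2 * √(1 + a * x + b * x ^ 2)) ≤ 0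
      ↔ 4 * b ≤ a ^ 2 := by
  rw [div_le_iff₀ (by positivity), zero_mul, sub_sub, sub_nonpos]
  exact two_sqrt_quadratic_le_iff ha hx

theorem g_zero_zero_eq (σ φ D T N : ℝ) :
    (fun ρ => g σ φ D T ρ 0 N 0) = fun ρ =>
      (-1 + √(1 + 4 * φ * D / N * ρ + 4 * (φ * D) ^ 2 / (N * T) * ρ ^ 2)) / (2 * σ * ρ) := by
  funext ρ
  simp only [g, B]
  ring_nf

theorem four_mul_le_sq_iff {p N T : ℝ} (hp : 0 < p) (hN : 0 < N) (hT : 0 < T) :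
    4 * (4 * p ^ 2 / (N * T)) ≤ (4 * p / N) ^ 2 ↔ N ≤ T := by
  rw [div_pow, ← mul_div_assoc, div_le_div_iff₀ (by positivity) (by positivity)]
  have hpN : 0 < p * p * N := by positivity
  constructor <;> intro h <;> nlinarith

/-- `ρ' ↦ g(0,0,N₁;ρ')` is differentiable at any `ρ > 0`, and its derivative
there is nonpositive iff `N₁ ≤ T`. -/
theorem stmt_13 (σ φ D T : ℝ) (hσ : 0 < σ) (hφ : 0 < φ) (hD : 0 < D) (hT : 0 < T)
    (N₁ : ℕ) (hN₁ : 0 < N₁) (ρ : ℝ) (hρ : 0 < ρ) :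
    DifferentiableAt ℝ (fun ρ' => g σ φ D T ρ' 0 N₁ 0) ρ ∧
    (deriv (fun ρ' => g σ φ D T ρ' 0 N₁ 0) ρ ≤ 0 ↔ (N₁ : ℝ) ≤ T) := by
  have hN : (0 : ℝ) < N₁ := Nat.cast_pos.mpr hN₁
  have hpD : 0 < φ * D := mul_pos hφ hD
  have ha : 0 < 4 * φ * D / N₁ := by positivity
  have hu : 0 < 1 + 4 * φ * D / N₁ * ρ + 4 * (φ * D) ^ 2 / (N₁ * T) * ρ ^ 2 := by positivity
  have hder := hasDerivAt_sqrt_quadratic_div _ _ (c := 2 * σ) (by positivity) hρ.ne' hu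
  rw [g_zero_zero_eq]
  refine ⟨hder.differentiableAt, ?_⟩
  rw [hder.deriv, sqrt_quadratic_deriv_nonpos_iff ha.le (by positivity) hρ hu, mul_assoc 4 φ D]
  exact four_mul_le_sq_iff hpD hN hT
end

section
/- Suppose N₁ + N₂ < T. Then for every ρ > 0 and every d₁ ∈ [0, g(0,0,N₁;ρ)], the derivative of ρ' ↦ g(d₁,N₁,N₂;ρ') at ρ is strictly negative. -/
/-!
The radicand of `g(d₁,N₁,N₂;ρ)` is a quadratic `1 + 2aρ + bρ²` in `ρ`, so `2σ g` is
`ρ ↦ (√(1 + 2aρ + bρ²) - 1) / ρ`. The numerator of the derivative of this function has the sign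
of `√(1 + 2aρ + bρ²) - (1 + aρ)`, which is negative when `a ≥ 0` and `b < a²`. Here `b < a²` is
the positive definiteness of a binary quadratic form, which is where `N₁ + N₂ < T` enters, and
`a ≥ 0` follows from `B(d₁,N₁;ρ) ≥ 0`, which is what `d₁ ≤ g(0,0,N₁;ρ)` says.
-/

lemma deriv_sqrt_quadratic_sub_one_div_neg {a b ρ : ℝ} (hρ : 0 < ρ) (ha : 0 ≤ a)
    (hab : b < a ^ 2) (hq : 0 < 1 + 2 * a * ρ + b * ρ ^ 2) :
    deriv (fun r => (√(1 + 2 * a * r + b * r ^ 2) - 1) / r) ρ < 0 := by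
  set s := √(1 + 2 * a * ρ + b * ρ ^ 2) with hs
  have hs_sq : s ^ 2 = 1 + 2 * a * ρ + b * ρ ^ 2 := Real.sq_sqrt hq.le
  have hs_pos : 0 < s := Real.sqrt_pos.mpr hq
  have hquad : HasDerivAt (fun r => 1 + 2 * a * r + b * r ^ 2) (2 * a + b * (2 * ρ)) ρ := by
    simpa using (((hasDerivAt_id' ρ).const_mul (2 * a)).const_add 1).fun_add
      ((hasDerivAt_pow 2 ρ).const_mul b)
  have hderiv : HasDerivAt (fun r => (√(1 + 2 * a * r + b * r ^ 2) - 1) / r)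
      (((2 * a + b * (2 * ρ)) / (2 * s) * ρ - (s - 1) * 1) / ρ ^ 2) ρ :=
    ((hquad.sqrt hq.ne').sub_const 1).fun_div (hasDerivAt_id' ρ) hρ.ne'
  rw [hderiv.deriv]
  apply div_neg_of_neg_of_pos _ (by positivity)
  have hs_lt : s < 1 + a * ρ := by
    rw [hs, Real.sqrt_lt' (by positivity)]
    nlinarith [mul_lt_mul_of_pos_right hab (pow_pos hρ 2)]
  rw [mul_one, sub_neg, div_mul_eq_mul_div, div_lt_iff₀ (by positivity)]
  nlinarith

lemma mul_sub_mul_sq_lt_sq_of_add_lt {n₁ n₂ T P x : ℝ} (hn₁ : 0 < n₁) (hn₂ : 0 < n₂)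
    (hsum : n₁ + n₂ < T) (hP : 0 < P) :
    n₂ * (P ^ 2 / T - n₁ * x ^ 2) < (P - n₁ * x) ^ 2 := by
  have hT : 0 < T := by linarith
  have hTn₂ : 0 < T - n₂ := by linarith
  have key : (T - n₂) * T * ((P - n₁ * x) ^ 2 - n₂ * (P ^ 2 / T - n₁ * x ^ 2))
      = ((T - n₂) * P - T * n₁ * x) ^ 2 + T * n₁ * n₂ * (T - n₁ - n₂) * x ^ 2 := by
    field_simp
    ring
  have hpos : 0 < ((T - n₂) * P - T * n₁ * x) ^ 2 + T * n₁ * n₂ * (T - n₁ - n₂) * x ^ 2 := by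
    rcases eq_or_ne x 0 with rfl | hx
    · simp only [mul_zero, sub_zero, ne_eq, OfNat.ofNat_ne_zero, not_false_eq_true,
        zero_pow, add_zero]
      positivity
    · have : 0 < T - n₁ - n₂ := by linarith
      positivity
  rw [← key] at hpos
  exact sub_pos.mp (pos_of_mul_pos_right hpos (by positivity))

lemma one_add_mul_B_eq_quadratic (σ φ D T ρ N' N d : ℝ) :
    1 + 4 * ρ / N * B σ φ D T ρ N' d =
      1 + 2 * (2 * (φ * D - σ * N' * d) / N) * ρ
        + 4 * ((φ * D) ^ 2 / T - σ ^ 2 * N' * d ^ 2) / N * ρ ^ 2 := by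
  unfold B
  ring

lemma B_nonneg_of_le_g {σ φ D T ρ N d : ℝ} (hσ : 0 < σ) (hρ : 0 < ρ) (hN : 0 < N)
    (hd : 0 ≤ d) (hdg : d ≤ g σ φ D T ρ 0 N 0) : 0 ≤ B σ φ D T ρ N d := by
  have hroot : (1 + 2 * σ * ρ * d) ^ 2 ≤ 1 + 4 * ρ / N * B σ φ D T ρ 0 0 := by
    rw [g, le_div_iff₀ (by positivity)] at hdg
    exact (Real.le_sqrt' (by positivity)).mp (by linarith)
  have hB : 4 * ρ / N * B σ φ D T ρ N d
      = 4 * ρ / N * B σ φ D T ρ 0 0 - (4 * σ * ρ * d + 4 * σ ^ 2 * ρ ^ 2 * d ^ 2) := by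
    unfold B
    field_simp
    ring
  exact (mul_nonneg_iff_of_pos_left (c := 4 * ρ / N) (by positivity)).mp (by nlinarith)

lemma mul_le_of_B_nonneg {σ φ D T ρ N d : ℝ} (hT : 0 < T) (hρ : 0 ≤ ρ) (hN : 0 ≤ N)
    (hNT : N ≤ T) (hP : 0 ≤ φ * D) (hB : 0 ≤ B σ φ D T ρ N d) :
    σ * N * d ≤ φ * D := by
  by_contra! h
  have hTB : T * B σ φ D T ρ N d
      = T * (φ * D - σ * N * d) + ρ * ((φ * D) ^ 2 - T * N * (σ * d) ^ 2) := by
    unfold B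
    field_simp
    ring
  have hsq : (φ * D) ^ 2 < T * N * (σ * d) ^ 2 := calc
    (φ * D) ^ 2 < (N * (σ * d)) ^ 2 := pow_lt_pow_left₀ (by linarith) hP two_ne_zero
    _ = N * N * (σ * d) ^ 2 := by ring
    _ ≤ T * N * (σ * d) ^ 2 := by gcongr
  nlinarith [mul_nonneg hT.le hB, mul_nonneg hρ (sub_nonneg.mpr hsq.le)]

/-- if `N₁ + N₂ < T` then for every `ρ > 0` and every
`d₁ ∈ [0, g(0,0,N₁;ρ)]` the derivative of `ρ' ↦ g(d₁,N₁,N₂;ρ')` at `ρ` is negative. -/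
theorem stmt_17 (σ φ D T : ℝ) (hσ : 0 < σ) (hφ : 0 < φ) (hD : 0 < D) (hT : 0 < T)
    (N₁ N₂ : ℕ) (hN₁ : 0 < N₁) (hN₂ : 0 < N₂)
    (hsum : (N₁ : ℝ) + N₂ < T) :
    ∀ ρ : ℝ, 0 < ρ → ∀ d₁ ∈ Set.Icc 0 (g σ φ D T ρ 0 N₁ 0),
      deriv (fun ρ' => g σ φ D T ρ' N₁ N₂ d₁) ρ < 0 := by
  intro ρ hρ d hd
  have hn₁ : (0 : ℝ) < N₁ := by exact_mod_cast hN₁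
  have hn₂ : (0 : ℝ) < N₂ := by exact_mod_cast hN₂
  have hB := B_nonneg_of_le_g hσ hρ hn₁ hd.1 hd.2
  set a := 2 * (φ * D - σ * N₁ * d) / N₂
  set b := 4 * ((φ * D) ^ 2 / T - σ ^ 2 * N₁ * d ^ 2) / N₂
  have hg : (fun ρ' => g σ φ D T ρ' N₁ N₂ d)
      = fun r => (√(1 + 2 * a * r + b * r ^ 2) - 1) / r / (2 * σ) := by
    funext r
    rw [g, one_add_mul_B_eq_quadratic]
    ring
  rw [hg, deriv_div_const]
  refine div_neg_of_neg_of_pos (deriv_sqrt_quadratic_sub_one_div_neg hρ ?_ ?_ ?_) (by positivity)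
  · have hcost := mul_le_of_B_nonneg hT hρ.le hn₁.le (by linarith) (by positivity) hB
    exact div_nonneg (by linarith) hn₂.le
  · have hform := mul_sub_mul_sq_lt_sq_of_add_lt (x := σ * d) hn₁ hn₂ hsum (mul_pos hφ hD)
    have hb : b = 4 * (N₂ * ((φ * D) ^ 2 / T - N₁ * (σ * d) ^ 2)) / N₂ ^ 2 := by
      simp only [b]
      field_simp
    rw [hb, div_pow, div_lt_div_iff_of_pos_right (by positivity)]
    nlinarith
  · rw [← one_add_mul_B_eq_quadratic]
    have hterm := mul_nonneg (by positivity : (0 : ℝ) ≤ 4 * ρ / N₂) hB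
    linarith
end
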